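/- Over an algebraically closed field F, for parameters α, β ∈ F \ {0,1}, the algebras E^α_{5,18} : e₁² = e₄, e₂² = e₄ + e₅, e₃² = e₄ + α e₅, e₄² = e₅ and E^β_{5,18} are isomorphic if and only if β ∈ {α, α⁻¹, 1−α, (1−α)⁻¹, α(α−1)⁻¹, α⁻¹(α−1)}. -/

import Mathlib

/-- Multiplication of `E₅,₁₈^α : e₁² = e₄, e₂² = e₄ + e₅, e₃² = e₄ + α e₅, e₄² = e₅`
on `F⁵` (all other products of natural basis vectors are zero). -/
def mulE518 {F : Type*} [Field F] (α : F) :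
    (Fin 5 → F) → (Fin 5 → F) → (Fin 5 → F) :=
  fun x y => ![0, 0, 0, x 0 * y 0 + x 1 * y 1 + x 2 * y 2,
    x 1 * y 1 + α * (x 2 * y 2) + x 3 * y 3]

/-!
An isomorphism `σ : E^α → E^β` must send `e₄ = e₁²` to `p e₄ + q e₅` and `e₅ = e₄²` to `p² e₅`
with `p ≠ 0`, and it maps `span(e₁, e₂, e₃)` into itself modulo `e₅`. On that span the algebra is
the pencil of quadratic forms `x₁² + x₂² + x₃²` (coefficient of `e₄`) and `x₂² + α x₃²`
(coefficient of `e₅`), so the block `W` of `σ` satisfies `Wᵀ W = p` and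
`Wᵀ diag(0, 1, β) W = q + p² diag(0, 1, α)`. Taking determinants of `Wᵀ (x - diag(0, 1, β)) W`
shows that the affine map `t ↦ q/p + p t` carries `{0, 1, α}` onto `{0, 1, β}`, which leaves
exactly the six values of the anharmonic orbit of `α`.

Conversely, swapping `e₂, e₃` and rescaling gives `E^{γ⁻¹} ≅ E^γ` for squares `γ ≠ 0`, swapping
`e₁, e₂` and rescaling by a square root of `-1` gives `E^α ≅ E^{1-α}`, and these two generate
the whole orbit.
-/

open Matrix

theorem Matrix.det_sub_of_transpose_mul_self {n R : Type*} [Fintype n] [DecidableEq n]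
    [CommRing R] {W B C : Matrix n n R} {p : R} (hW : Wᵀ * W = p • 1)
    (hB : Wᵀ * B * W = p • C) (x : R) :
    p ^ Fintype.card n * (x • 1 - B).det = p ^ Fintype.card n * (x • 1 - C).det := by
  have hconj : Wᵀ * (x • 1 - B) * W = p • (x • 1 - C) := by
    rw [Matrix.mul_sub, Matrix.sub_mul, hB, Matrix.mul_smul, Matrix.smul_mul, Matrix.mul_one, hW,
      smul_sub, smul_comm]
  calc p ^ Fintype.card n * (x • 1 - B).det
      = (Wᵀ * W).det * (x • 1 - B).det := by rw [hW, det_smul, det_one, mul_one]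
    _ = (Wᵀ * (x • 1 - B) * W).det := by rw [det_mul, det_mul, det_mul]; ring
    _ = p ^ Fintype.card n * (x • 1 - C).det := by rw [hconj, det_smul]

section

variable {F : Type*} [Field F]

def anharmonicOrbit (α : F) : Set F :=
  {α, α⁻¹, 1 - α, (1 - α)⁻¹, α * (α - 1)⁻¹, α⁻¹ * (α - 1)}

theorem mem_anharmonicOrbit_of_cubic_eq {α β a b : F} (hα0 : α ≠ 0) (hα1 : α ≠ 1) (hab : a ≠ b)
    (H : ∀ x, x * (x - 1) * (x - β) = (x - a) * (x - b) * (x - (a + α * (b - a)))) :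
    β ∈ anharmonicOrbit α := by
  have root : ∀ r, r = a ∨ r = b → r = 0 ∨ r = 1 ∨ r = β := by
    rintro r hr
    have h := H r
    rcases hr with rfl | rfl <;> simpa [sub_eq_zero, or_assoc] using h
  have hα1' : α - 1 ≠ 0 := sub_ne_zero.mpr hα1
  -- the `x²`-coefficients agree: a quadratic vanishing at `0, 1, α` is zero
  have hsum : a + b + (a + α * (b - a)) = 1 + β := by
    have h : (a + b + (a + α * (b - a)) - (1 + β)) * (α * (α - 1)) = 0 := by
      linear_combination H α - α * H 1 + (α - 1) * H 0
    simpa [hα0, hα1', sub_eq_zero] using h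
  simp only [anharmonicOrbit, Set.mem_insert_iff, Set.mem_singleton_iff]
  rcases root a (.inl rfl) with ha | ha | ha <;> rcases root b (.inr rfl) with hb | hb | hb <;>
    rw [ha, hb] at hsum hab
  · exact absurd rfl hab
  · exact .inl (by linear_combination -hsum)
  · exact .inr <| .inl <| eq_inv_of_mul_eq_one_right (by linear_combination hsum)
  · exact .inr <| .inr <| .inl (by linear_combination -hsum)
  · exact absurd rfl hab
  · refine .inr <| .inr <| .inr <| .inr <| .inr ?_
    exact (eq_inv_mul_iff_mul_eq₀ hα0).mpr (by linear_combination hsum)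
  · exact .inr <| .inr <| .inr <| .inl <| eq_inv_of_mul_eq_one_right (by linear_combination hsum)
  · refine .inr <| .inr <| .inr <| .inr <| .inl ?_
    exact (eq_mul_inv_iff_mul_eq₀ hα1').mpr (by linear_combination -hsum)
  · exact absurd rfl hab

def E518Isomorphic (α β : F) : Prop :=
  ∃ σ : (Fin 5 → F) ≃ₗ[F] (Fin 5 → F), ∀ x y, σ (mulE518 α x y) = mulE518 β (σ x) (σ y)

namespace E518

def ι : Fin 3 → Fin 5 := ![0, 1, 2]

theorem mul_apply_three (α : F) (x y : Fin 5 → F) :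
    mulE518 α x y 3 = ∑ k, x (ι k) * y (ι k) := by
  simp [ι, mulE518, Fin.sum_univ_three]

theorem mul_apply_four (α : F) (x y : Fin 5 → F) :
    mulE518 α x y 4 = ∑ k, ![0, 1, α] k * (x (ι k) * y (ι k)) + x 3 * y 3 := by
  simp [ι, mulE518, Fin.sum_univ_three]

theorem mul_eq (α : F) (x y : Fin 5 → F) :
    mulE518 α x y = ![0, 0, 0, mulE518 α x y 3, mulE518 α x y 4] := by
  ext k; fin_cases k <;> rfl

theorem mul_single_single (α : F) (i j : Fin 3) :
    mulE518 α (Pi.single (ι i) 1) (Pi.single (ι j) 1) =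
      if i = j then ![0, 0, 0, 1, ![0, 1, α] i] else 0 := by
  fin_cases i <;> fin_cases j <;> ext k <;> fin_cases k <;> simp [ι, mulE518]

theorem mul_single_single_three (α : F) (i : Fin 3) :
    mulE518 α (Pi.single (ι i) 1) (Pi.single 3 1) = 0 := by
  fin_cases i <;> ext k <;> fin_cases k <;> simp [ι, mulE518]

theorem mul_single_three_self (α : F) :
    mulE518 α (Pi.single 3 1) (Pi.single 3 1) = Pi.single 4 1 := by
  ext k; fin_cases k <;> simp [mulE518]

def block (σ : (Fin 5 → F) ≃ₗ[F] (Fin 5 → F)) : Matrix (Fin 3) (Fin 3) F :=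
  .of fun k i => σ (Pi.single (ι i) 1) (ι k)

section Hom

variable {α β p q : F} {σ : (Fin 5 → F) ≃ₗ[F] (Fin 5 → F)}

theorem apply_single_three (hσ : ∀ x y, σ (mulE518 α x y) = mulE518 β (σ x) (σ y)) :
    σ (Pi.single 3 1) = ![0, 0, 0, σ (Pi.single 3 1) 3, σ (Pi.single 3 1) 4] := by
  have h : σ (Pi.single 3 1) = mulE518 β (σ (Pi.single 0 1)) (σ (Pi.single 0 1)) := by
    rw [← hσ]; congr 1; ext k; fin_cases k <;> simp [mulE518]
  rw [h]
  exact mul_eq _ _ _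

theorem apply_single_four (hσ : ∀ x y, σ (mulE518 α x y) = mulE518 β (σ x) (σ y))
    (h3 : σ (Pi.single 3 1) = ![0, 0, 0, p, q]) :
    σ (Pi.single 4 1) = ![0, 0, 0, 0, p ^ 2] := by
  rw [← mul_single_three_self α, hσ, h3]
  ext k; fin_cases k <;> simp [mulE518, sq]

theorem ne_zero_of_apply_single_three (hσ : ∀ x y, σ (mulE518 α x y) = mulE518 β (σ x) (σ y))
    (h3 : σ (Pi.single 3 1) = ![0, 0, 0, p, q]) : p ≠ 0 := by
  rintro rfl
  have h : σ (Pi.single 4 1) = σ 0 := by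
    rw [apply_single_four hσ h3, map_zero]; ext k; fin_cases k <;> simp
  simpa using congrFun (σ.injective h) 4

theorem apply_single_apply_three (hσ : ∀ x y, σ (mulE518 α x y) = mulE518 β (σ x) (σ y))
    (h3 : σ (Pi.single 3 1) = ![0, 0, 0, p, q]) (i : Fin 3) :
    σ (Pi.single (ι i) 1) 3 = 0 := by
  have h := congrFun (hσ (Pi.single (ι i) 1) (Pi.single 3 1)) 4
  rw [mul_single_single_three, map_zero, h3] at h
  simpa [mulE518, ne_zero_of_apply_single_three hσ h3] using h.symm

theorem mul_apply_single_apply_single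
    (hσ : ∀ x y, σ (mulE518 α x y) = mulE518 β (σ x) (σ y))
    (h3 : σ (Pi.single 3 1) = ![0, 0, 0, p, q]) (i j : Fin 3) :
    mulE518 β (σ (Pi.single (ι i) 1)) (σ (Pi.single (ι j) 1)) =
      if i = j then ![0, 0, 0, p, q + ![0, 1, α] i * p ^ 2] else 0 := by
  rw [← hσ, mul_single_single]
  split_ifs
  · have h : (![0, 0, 0, 1, ![0, 1, α] i] : Fin 5 → F) =
        Pi.single 3 1 + ![0, 1, α] i • Pi.single 4 1 := by
      ext k; fin_cases k <;> simp
    rw [h, map_add, map_smul, apply_single_four hσ h3, h3]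
    ext k; fin_cases k <;> simp
  · exact map_zero σ

theorem block_transpose_mul_block (hσ : ∀ x y, σ (mulE518 α x y) = mulE518 β (σ x) (σ y))
    (h3 : σ (Pi.single 3 1) = ![0, 0, 0, p, q]) :
    (block σ)ᵀ * block σ = p • 1 := by
  ext i j
  have h := congrFun (mul_apply_single_apply_single hσ h3 i j) 3
  rw [mul_apply_three] at h
  simp only [block, mul_apply, transpose_apply, of_apply, h]
  split_ifs with hij <;> simp [hij]

theorem block_transpose_mul_diagonal_mul_block
    (hσ : ∀ x y, σ (mulE518 α x y) = mulE518 β (σ x) (σ y))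
    (h3 : σ (Pi.single 3 1) = ![0, 0, 0, p, q]) :
    (block σ)ᵀ * diagonal ![0, 1, β] * block σ =
      p • diagonal fun i => q / p + ![0, 1, α] i * p := by
  have hp := ne_zero_of_apply_single_three hσ h3
  ext i j
  have h := congrFun (mul_apply_single_apply_single hσ h3 i j) 4
  rw [mul_apply_four, apply_single_apply_three hσ h3, zero_mul, add_zero] at h
  rw [mul_apply]
  simp only [block, mul_diagonal, transpose_apply, of_apply]
  simp only [mul_comm _ (![0, 1, β] _), mul_assoc, h]
  split_ifs with hij
  · subst hij; simp; field_simp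
  · simp [hij]

end Hom

def invHom (s p : F) : (Fin 5 → F) →ₗ[F] (Fin 5 → F) where
  toFun x := ![s * x 0, s * x 2, s * x 1, p * x 3, p ^ 2 * x 4]
  map_add' x y := by ext k; fin_cases k <;> simp <;> ring
  map_smul' c x := by ext k; fin_cases k <;> simp <;> ring

def oneSubHom (s : F) : (Fin 5 → F) →ₗ[F] (Fin 5 → F) where
  toFun x := ![s * x 1, s * x 0, s * x 2, -x 3, x 4 - x 3]
  map_add' x y := by ext k; fin_cases k <;> simp <;> ring
  map_smul' c x := by ext k; fin_cases k <;> simp <;> ring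

end E518

namespace E518Isomorphic

open E518

variable {α β γ : F}

theorem refl (α : F) : E518Isomorphic α α := ⟨LinearEquiv.refl F _, fun _ _ => rfl⟩

theorem trans : E518Isomorphic α β → E518Isomorphic β γ → E518Isomorphic α γ
  | ⟨σ, hσ⟩, ⟨τ, hτ⟩ => ⟨σ.trans τ, fun x y => by simp [hσ, hτ]⟩

theorem of_injective (f : (Fin 5 → F) →ₗ[F] (Fin 5 → F)) (hf : Function.Injective f)
    (hmul : ∀ x y, f (mulE518 α x y) = mulE518 β (f x) (f y)) : E518Isomorphic α β :=
  ⟨.ofInjectiveEndo f hf, hmul⟩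

theorem inv_sq {s : F} (hs : s ≠ 0) : E518Isomorphic (s ^ 2)⁻¹ (s ^ 2) := by
  refine of_injective (invHom s (s ^ 2)) ((injective_iff_map_eq_zero _).mpr fun x hx => ?_)
    fun x y => ?_
  · simp [invHom, funext_iff, Fin.forall_fin_succ, hs] at hx
    ext k; fin_cases k <;> simp [hx]
  · ext k; fin_cases k <;> simp [invHom, mulE518] <;> field_simp <;> ring

theorem one_sub_of_sq_eq_neg_one {s : F} (hs : s ^ 2 = -1) (α : F) :
    E518Isomorphic α (1 - α) := by
  have hs0 : s ≠ 0 := by rintro rfl; simp [eq_comm] at hs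
  refine of_injective (oneSubHom s) ((injective_iff_map_eq_zero _).mpr fun x hx => ?_)
    fun x y => ?_
  · simp [oneSubHom, funext_iff, Fin.forall_fin_succ, hs0, sub_eq_zero] at hx
    ext k; fin_cases k <;> simp [hx]
  · ext k
    fin_cases k <;> simp [oneSubHom, mulE518]
    · linear_combination (-(x 0 * y 0 + x 1 * y 1 + x 2 * y 2)) * hs
    · linear_combination (-(x 0 * y 0 + (1 - α) * (x 2 * y 2))) * hs

theorem of_mem_anharmonicOrbit [IsAlgClosed F] (hα0 : α ≠ 0) (hα1 : α ≠ 1)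
    (h : β ∈ anharmonicOrbit α) : E518Isomorphic α β := by
  have inv {γ : F} (hγ : γ ≠ 0) : E518Isomorphic γ γ⁻¹ := by
    obtain ⟨s, hs⟩ := IsAlgClosed.exists_pow_nat_eq γ⁻¹ two_pos
    have hs0 : s ≠ 0 := by rintro rfl; simp [eq_comm, hγ] at hs
    simpa [hs] using inv_sq hs0
  obtain ⟨i, hi⟩ := IsAlgClosed.exists_pow_nat_eq (-1 : F) two_pos
  have one_sub := one_sub_of_sq_eq_neg_one hi
  have hα1' : 1 - α ≠ 0 := sub_ne_zero.mpr hα1.symm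
  simp only [anharmonicOrbit, Set.mem_insert_iff, Set.mem_singleton_iff] at h
  rcases h with rfl | rfl | rfl | rfl | rfl | rfl
  · exact refl β
  · exact inv hα0
  · exact one_sub α
  · exact (one_sub α).trans (inv hα1')
  · have h : α * (α - 1)⁻¹ = 1 - (1 - α)⁻¹ := by
      field_simp [sub_ne_zero.mpr hα1]; ring
    rw [h]
    exact ((one_sub α).trans (inv hα1')).trans (one_sub _)
  · have h : α⁻¹ * (α - 1) = 1 - α⁻¹ := by field_simp
    rw [h]
    exact (inv hα0).trans (one_sub _)

theorem mem_anharmonicOrbit (hα0 : α ≠ 0) (hα1 : α ≠ 1) (h : E518Isomorphic α β) :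
    β ∈ anharmonicOrbit α := by
  obtain ⟨σ, hσ⟩ := h
  have h3 := apply_single_three hσ
  set p := σ (Pi.single 3 1) 3
  set q := σ (Pi.single 3 1) 4
  have hp : p ≠ 0 := ne_zero_of_apply_single_three hσ h3
  refine mem_anharmonicOrbit_of_cubic_eq (a := q / p) (b := q / p + p) hα0 hα1
    (by simpa using hp) fun x => ?_
  have h := det_sub_of_transpose_mul_self (block_transpose_mul_block hσ h3)
    (block_transpose_mul_diagonal_mul_block hσ h3) x
  simp [smul_one_eq_diagonal, diagonal_sub, det_diagonal, Fin.prod_univ_three, hp] at h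
  linear_combination h

end E518Isomorphic

end

theorem stmt16_general {F : Type*} [Field F] [IsAlgClosed F] (α β : F)
    (hα0 : α ≠ 0) (hα1 : α ≠ 1) :
    (∃ σ : (Fin 5 → F) ≃ₗ[F] (Fin 5 → F),
        ∀ x y, σ (mulE518 α x y) = mulE518 β (σ x) (σ y)) ↔
      (β = α ∨ β = α⁻¹ ∨ β = 1 - α ∨ β = (1 - α)⁻¹ ∨
        β = α * (α - 1)⁻¹ ∨ β = α⁻¹ * (α - 1)) :=
  ⟨E518Isomorphic.mem_anharmonicOrbit hα0 hα1, E518Isomorphic.of_mem_anharmonicOrbit hα0 hα1⟩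

/-- Over an algebraically closed field `F`, for `α, β ∈ F \ {0,1}`,
the algebras `E₅,₁₈^α` and `E₅,₁₈^β` are isomorphic if and only if
`β ∈ {α, α⁻¹, 1−α, (1−α)⁻¹, α(α−1)⁻¹, α⁻¹(α−1)}`. -/
theorem stmt16 {F : Type*} [Field F] [IsAlgClosed F] (α β : F)
    (hα0 : α ≠ 0) (hα1 : α ≠ 1) (hβ0 : β ≠ 0) (hβ1 : β ≠ 1) :
    (∃ σ : (Fin 5 → F) ≃ₗ[F] (Fin 5 → F),
        ∀ x y, σ (mulE518 α x y) = mulE518 β (σ x) (σ y)) ↔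
      (β = α ∨ β = α⁻¹ ∨ β = 1 - α ∨ β = (1 - α)⁻¹ ∨
        β = α * (α - 1)⁻¹ ∨ β = α⁻¹ * (α - 1)) :=
  stmt16_general α β hα0 hα1
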